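/- For a tower of number fields L/E/K, the relative logarithmic discriminant satisfies d_K(L) = (1/[E:K]) d_E(L) + d_K(E), where d_K(E) := (1/[E:K]) log|Disc(O_E)| − log|Disc(O_K)|. -/
import Mathlib


open NumberField Module

/-- The relative logarithmic discriminant `d_K(E) = (1/[E:K]) log|Disc(O_E)| − log|Disc(O_K)|`. -/
noncomputable def relLogDisc (K E : Type*) [Field K] [Field E] [NumberField K] [NumberField E]
    [Algebra K E] : ℝ :=
  (Module.finrank K E : ℝ)⁻¹ * Real.log |(NumberField.discr E : ℝ)| -
    Real.log |(NumberField.discr K : ℝ)|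

/-- For a tower of number fields `L/E/K`,
`d_K(L) = (1/[E:K]) d_E(L) + d_K(E)`. -/
theorem relLogDisc_tower (K E L : Type*) [Field K] [Field E] [Field L]
    [NumberField K] [NumberField E] [NumberField L]
    [Algebra K E] [Algebra E L] [Algebra K L] [IsScalarTower K E L] :
    relLogDisc K L = (Module.finrank K E : ℝ)⁻¹ * relLogDisc E L + relLogDisc K E := by
  haveI : FiniteDimensional K E := FiniteDimensional.right ℚ K E
  haveI : FiniteDimensional E L := FiniteDimensional.right ℚ E L
  have h1 : (Module.finrank K E : ℝ) ≠ 0 := by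
    exact_mod_cast Module.finrank_pos.ne'
  have h2 : (Module.finrank E L : ℝ) ≠ 0 := by
    exact_mod_cast Module.finrank_pos.ne'
  unfold relLogDisc
  rw [← Module.finrank_mul_finrank K E L]
  push_cast
  field_simp
  ring
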